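/- arXiv:2102.01828 — 4 statements merged into one kernel-verified Lean document; each statement's English description precedes it below -/
import Mathlib

section
/- For all natural numbers n₁, m₁, n₂, m₂ ≥ 0, the entrywise integral (1/(2π)) ∫_{−π}^{π} S^{n₁,m₁}(α) ⊗ S^{n₂,m₂}(−α) dα equals E₀^{n₁,m₁} ⊗ E₀^{n₂,m₂} + E₁^{n₁,m₁} ⊗ E₁^{n₂,m₂}, where ⊗ denotes the Kronecker product of matrices. -/
open Matrix Kronecker

/-- `Espider b n m` is the `2^m × 2^n` complex matrix `|b…b⟩⟨b…b|`, with rows indexed by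
bit-strings of length `m` and columns by bit-strings of length `n`; its only nonzero entry is
a `1` in the row indexed by the all-`b` string of length `m` and the column indexed by the
all-`b` string of length `n`. -/
def Espider (b : Fin 2) (n m : ℕ) : Matrix (Fin m → Fin 2) (Fin n → Fin 2) ℂ :=
  fun r c => if r = (fun _ => b) ∧ c = (fun _ => b) then 1 else 0

/-- The Z-spider with `n` inputs, `m` outputs and phase `α`:
`S^{n,m}(α) = E₀^{n,m} + e^{iα} E₁^{n,m}`. -/
noncomputable def Zspider (n m : ℕ) (α : ℝ) : Matrix (Fin m → Fin 2) (Fin n → Fin 2) ℂ :=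
  Espider 0 n m + Complex.exp (Complex.I * α) • Espider 1 n m

lemma int_exp_I : ∫ α in (-Real.pi)..Real.pi, Complex.exp (Complex.I * α) = 0 := by
  rw [integral_exp_mul_complex Complex.I_ne_zero]
  rw [mul_comm Complex.I (Real.pi : ℂ), Complex.exp_pi_mul_I]
  have : Complex.exp (Complex.I * ((-Real.pi : ℝ) : ℂ)) = -1 := by
    push_cast
    rw [mul_neg, Complex.exp_neg, mul_comm, Complex.exp_pi_mul_I]
    norm_num
  rw [this]
  simp

lemma int_exp_negI : ∫ α in (-Real.pi)..Real.pi, Complex.exp (-Complex.I * α) = 0 := by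
  have h : (-Complex.I) ≠ 0 := by simpa using Complex.I_ne_zero
  rw [integral_exp_mul_complex h]
  have h1 : Complex.exp (-Complex.I * (Real.pi : ℂ)) = -1 := by
    rw [neg_mul, Complex.exp_neg, mul_comm, Complex.exp_pi_mul_I]
    norm_num
  have h2 : Complex.exp (-Complex.I * ((-Real.pi : ℝ) : ℂ)) = -1 := by
    push_cast
    rw [mul_neg, neg_mul, neg_neg, mul_comm, Complex.exp_pi_mul_I]
  rw [h1, h2]
  simp

/-- `(1/(2π)) ∫_{−π}^{π} S^{n₁,m₁}(α) ⊗ S^{n₂,m₂}(−α) dα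
  = E₀^{n₁,m₁} ⊗ E₀^{n₂,m₂} + E₁^{n₁,m₁} ⊗ E₁^{n₂,m₂}` entrywise. -/
theorem stmt0 (n₁ m₁ n₂ m₂ : ℕ)
    (r : (Fin m₁ → Fin 2) × (Fin m₂ → Fin 2))
    (c : (Fin n₁ → Fin 2) × (Fin n₂ → Fin 2)) :
    (1 / (2 * (Real.pi : ℂ))) *
        ∫ α in (-Real.pi)..Real.pi, (Zspider n₁ m₁ α ⊗ₖ Zspider n₂ m₂ (-α)) r c
      = (Espider 0 n₁ m₁ ⊗ₖ Espider 0 n₂ m₂ + Espider 1 n₁ m₁ ⊗ₖ Espider 1 n₂ m₂) r c := by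
  set a1 := Espider 0 n₁ m₁ r.1 c.1 with ha1
  set b1 := Espider 1 n₁ m₁ r.1 c.1 with hb1
  set a2 := Espider 0 n₂ m₂ r.2 c.2 with ha2
  set b2 := Espider 1 n₂ m₂ r.2 c.2 with hb2
  have expand : ∀ α : ℝ, (Zspider n₁ m₁ α ⊗ₖ Zspider n₂ m₂ (-α)) r c
      = (a1 * a2 + b1 * b2) + Complex.exp (Complex.I * α) * (b1 * a2)
        + Complex.exp (-Complex.I * α) * (a1 * b2) := by
    intro α
    have he : Complex.exp (Complex.I * α) * Complex.exp (Complex.I * ((-α : ℝ) : ℂ)) = 1 := by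
      rw [← Complex.exp_add]
      push_cast
      ring_nf
      exact Complex.exp_zero
    have he2 : Complex.exp (Complex.I * ((-α : ℝ) : ℂ)) = Complex.exp (-Complex.I * α) := by
      push_cast; ring_nf
    simp only [Zspider, kroneckerMap_apply, Matrix.add_apply, Matrix.smul_apply, smul_eq_mul,
      ← ha1, ← hb1, ← ha2, ← hb2]
    rw [← he2]
    linear_combination (b1 * b2) * he
  have cont1 : Continuous fun α : ℝ => Complex.exp (Complex.I * α) :=
    Complex.continuous_exp.comp (continuous_const.mul Complex.continuous_ofReal)
  have cont2 : Continuous fun α : ℝ => Complex.exp (-Complex.I * α) :=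
    Complex.continuous_exp.comp (continuous_const.mul Complex.continuous_ofReal)
  have hi1 : IntervalIntegrable (fun α : ℝ => Complex.exp (Complex.I * α) * (b1 * a2))
      MeasureTheory.volume (-Real.pi) Real.pi :=
    (cont1.mul continuous_const).intervalIntegrable _ _
  have hi2 : IntervalIntegrable (fun α : ℝ => Complex.exp (-Complex.I * α) * (a1 * b2))
      MeasureTheory.volume (-Real.pi) Real.pi :=
    (cont2.mul continuous_const).intervalIntegrable _ _
  have hconst : IntervalIntegrable (fun _ : ℝ => a1 * a2 + b1 * b2)
      MeasureTheory.volume (-Real.pi) Real.pi := intervalIntegrable_const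
  have : (∫ α in (-Real.pi)..Real.pi, (Zspider n₁ m₁ α ⊗ₖ Zspider n₂ m₂ (-α)) r c)
      = 2 * (Real.pi : ℂ) * (a1 * a2 + b1 * b2) := by
    calc (∫ α in (-Real.pi)..Real.pi, (Zspider n₁ m₁ α ⊗ₖ Zspider n₂ m₂ (-α)) r c)
        = ∫ α in (-Real.pi)..Real.pi, ((a1 * a2 + b1 * b2)
            + Complex.exp (Complex.I * α) * (b1 * a2)
            + Complex.exp (-Complex.I * α) * (a1 * b2)) := by
          exact intervalIntegral.integral_congr (fun α _ => expand α)
      _ = (∫ _ in (-Real.pi)..Real.pi, (a1 * a2 + b1 * b2))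
            + (∫ α in (-Real.pi)..Real.pi, Complex.exp (Complex.I * α) * (b1 * a2))
            + (∫ α in (-Real.pi)..Real.pi, Complex.exp (-Complex.I * α) * (a1 * b2)) := by
          rw [intervalIntegral.integral_add (hconst.add hi1) hi2,
            intervalIntegral.integral_add hconst hi1]
      _ = 2 * (Real.pi : ℂ) * (a1 * a2 + b1 * b2) := by
          rw [intervalIntegral.integral_const, intervalIntegral.integral_mul_const,
            intervalIntegral.integral_mul_const, int_exp_I, int_exp_negI]
          simp
          push_cast
          ring
  rw [this]
  have hpi : (2 * (Real.pi : ℂ)) ≠ 0 := by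
    simp [Real.pi_ne_zero]
  rw [div_mul_eq_mul_div, one_mul, mul_comm, mul_div_assoc, div_self hpi, mul_one]
  simp [kroneckerMap_apply, Matrix.add_apply, ← ha1, ← hb1, ← ha2, ← hb2]
end

section
/- For all natural numbers n₁, m₁, n₂, m₂, n₃, m₃, n₄, m₄ ≥ 0, the entrywise integral (1/(2π)) ∫_{−π}^{π} S^{n₁,m₁}(α) ⊗ S^{n₂,m₂}(−α) ⊗ S^{n₃,m₃}(α) ⊗ S^{n₄,m₄}(−α) dα equals the sum, over the six quadruples (q₁,q₂,q₃,q₄) ∈ {0,1}⁴ satisfying q₁ + q₃ = q₂ + q₄ (namely 0000, 1111, 0011, 1100, 0110, 1001), of E_{q₁}^{n₁,m₁} ⊗ E_{q₂}^{n₂,m₂} ⊗ E_{q₃}^{n₃,m₃} ⊗ E_{q₄}^{n₄,m₄}, where ⊗ denotes the Kronecker product of matrices. -/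
open Matrix Kronecker

open Complex intervalIntegral

lemma exp_int_zero (k : ℤ) (hk : k ≠ 0) :
    ∫ α in (-Real.pi)..Real.pi, Complex.exp ((k : ℂ) * (Complex.I * α)) = 0 := by
  have hc : (k : ℂ) * Complex.I ≠ 0 :=
    mul_ne_zero (by exact_mod_cast hk) Complex.I_ne_zero
  have h1 : ∀ α : ℝ, (k : ℂ) * (Complex.I * α) = ((k : ℂ) * Complex.I) * α := by
    intro α; ring
  simp only [h1]
  rw [integral_exp_mul_complex hc]
  have h2 : ∀ x : ℝ, ((k : ℂ) * Complex.I) * (x : ℂ) = (k : ℤ) * ((x : ℂ) * Complex.I) := by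
    intro x; push_cast; ring
  have e1 : Complex.exp (((k:ℂ) * Complex.I) * ((Real.pi : ℝ) : ℂ)) = (-1 : ℂ) ^ k := by
    rw [h2, Complex.exp_int_mul, Complex.exp_pi_mul_I]
  have e2 : Complex.exp (((k:ℂ) * Complex.I) * (((-Real.pi : ℝ)) : ℂ)) = (-1 : ℂ) ^ k := by
    rw [h2, Complex.exp_int_mul]
    push_cast
    rw [neg_mul, Complex.exp_neg, Complex.exp_pi_mul_I]
    norm_num
  rw [e1, e2, sub_self, zero_div]

lemma six (a₁ b₁ a₂ b₂ a₃ b₃ a₄ b₄ : ℂ) :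
    (1 / (2 * (Real.pi : ℂ))) *
        ∫ α in (-Real.pi)..Real.pi,
          ((a₁ + Complex.exp (Complex.I * α) * b₁) *
              (a₂ + Complex.exp (Complex.I * ((-α : ℝ) : ℂ)) * b₂)) *
            ((a₃ + Complex.exp (Complex.I * α) * b₃) *
              (a₄ + Complex.exp (Complex.I * ((-α : ℝ) : ℂ)) * b₄))
      = a₁ * a₂ * (a₃ * a₄) + b₁ * b₂ * (b₃ * b₄) + a₁ * a₂ * (b₃ * b₄)
          + b₁ * b₂ * (a₃ * a₄) + a₁ * b₂ * (b₃ * a₄) + b₁ * a₂ * (a₃ * b₄) := by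
  set C0 : ℂ := a₁ * a₂ * (a₃ * a₄) + b₁ * b₂ * (b₃ * b₄) + a₁ * a₂ * (b₃ * b₄)
          + b₁ * b₂ * (a₃ * a₄) + a₁ * b₂ * (b₃ * a₄) + b₁ * a₂ * (a₃ * b₄) with hC0
  set C1 : ℂ := b₁*a₂*a₃*a₄ + a₁*a₂*b₃*a₄ + b₁*b₂*b₃*a₄ + b₁*a₂*b₃*b₄ with hC1
  set Cm1 : ℂ := a₁*b₂*a₃*a₄ + a₁*a₂*a₃*b₄ + b₁*b₂*a₃*b₄ + a₁*b₂*b₃*b₄ with hCm1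
  set C2 : ℂ := b₁*a₂*b₃*a₄ with hC2
  set Cm2 : ℂ := a₁*b₂*a₃*b₄ with hCm2
  have hfun : ∀ α : ℝ,
      ((a₁ + Complex.exp (Complex.I * α) * b₁) *
          (a₂ + Complex.exp (Complex.I * ((-α : ℝ) : ℂ)) * b₂)) *
        ((a₃ + Complex.exp (Complex.I * α) * b₃) *
          (a₄ + Complex.exp (Complex.I * ((-α : ℝ) : ℂ)) * b₄))
      = C0 + C1 * Complex.exp (((1:ℤ) : ℂ) * (Complex.I * α))
          + Cm1 * Complex.exp (((-1:ℤ) : ℂ) * (Complex.I * α))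
          + C2 * Complex.exp (((2:ℤ) : ℂ) * (Complex.I * α))
          + Cm2 * Complex.exp (((-2:ℤ) : ℂ) * (Complex.I * α)) := by
    intro α
    have hneg : Complex.exp (Complex.I * ((-α : ℝ) : ℂ)) = (Complex.exp (Complex.I * α))⁻¹ := by
      push_cast
      rw [mul_neg, Complex.exp_neg]
    have h1 : Complex.exp (((1:ℤ) : ℂ) * (Complex.I * α)) = Complex.exp (Complex.I * α) := by
      norm_num
    have hm1 : Complex.exp (((-1:ℤ) : ℂ) * (Complex.I * α)) = (Complex.exp (Complex.I * α))⁻¹ := by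
      push_cast
      rw [neg_one_mul, Complex.exp_neg]
    have h2 : Complex.exp (((2:ℤ) : ℂ) * (Complex.I * α)) = Complex.exp (Complex.I * α) ^ 2 := by
      push_cast
      rw [show ((2:ℂ)) * (Complex.I * α) = (Complex.I * α) + (Complex.I * α) by ring,
        Complex.exp_add, sq]
    have hm2 : Complex.exp (((-2:ℤ) : ℂ) * (Complex.I * α))
        = ((Complex.exp (Complex.I * α))⁻¹) ^ 2 := by
      push_cast
      rw [show ((-2:ℂ)) * (Complex.I * α) = -(Complex.I * α) + -(Complex.I * α) by ring,
        Complex.exp_add, Complex.exp_neg, sq]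
    rw [hneg, h1, hm1, h2, hm2]
    have hu : Complex.exp (Complex.I * α) ≠ 0 := Complex.exp_ne_zero _
    field_simp
    ring
  rw [intervalIntegral.integral_congr (g := fun α : ℝ =>
      C0 + C1 * Complex.exp (((1:ℤ) : ℂ) * (Complex.I * α))
        + Cm1 * Complex.exp (((-1:ℤ) : ℂ) * (Complex.I * α))
        + C2 * Complex.exp (((2:ℤ) : ℂ) * (Complex.I * α))
        + Cm2 * Complex.exp (((-2:ℤ) : ℂ) * (Complex.I * α))) (fun α _ => hfun α)]
  have hcont : ∀ k : ℤ, Continuous fun α : ℝ =>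
      Complex.exp ((k : ℂ) * (Complex.I * α)) := by
    intro k
    fun_prop
  have hint : ∀ (d : ℂ) (k : ℤ), IntervalIntegrable
      (fun α : ℝ => d * Complex.exp ((k : ℂ) * (Complex.I * α))) MeasureTheory.volume
      (-Real.pi) Real.pi := by
    intro d k
    exact (Continuous.intervalIntegrable (by fun_prop) _ _)
  have hintc : IntervalIntegrable (fun _ : ℝ => C0) MeasureTheory.volume (-Real.pi) Real.pi :=
    intervalIntegrable_const
  rw [integral_add (((hintc.add (hint C1 1)).add (hint Cm1 (-1))).add (hint C2 2)) (hint Cm2 (-2)),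
    integral_add ((hintc.add (hint C1 1)).add (hint Cm1 (-1))) (hint C2 2),
    integral_add (hintc.add (hint C1 1)) (hint Cm1 (-1)),
    integral_add hintc (hint C1 1)]
  rw [integral_const_mul, integral_const_mul, integral_const_mul, integral_const_mul]
  rw [exp_int_zero 1 (by norm_num), exp_int_zero (-1) (by norm_num),
    exp_int_zero 2 (by norm_num), exp_int_zero (-2) (by norm_num)]
  rw [integral_const]
  have hpi : (Real.pi : ℂ) ≠ 0 := by exact_mod_cast Real.pi_ne_zero
  simp only [mul_zero, add_zero, sub_neg_eq_add, real_smul]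
  push_cast
  field_simp
  ring

/-- `(1/(2π)) ∫_{−π}^{π} S^{n₁,m₁}(α) ⊗ S^{n₂,m₂}(−α) ⊗ S^{n₃,m₃}(α) ⊗ S^{n₄,m₄}(−α) dα`
equals the sum over the six quadruples `(q₁,q₂,q₃,q₄) ∈ {0,1}⁴` with `q₁ + q₃ = q₂ + q₄`
(namely 0000, 1111, 0011, 1100, 0110, 1001) of
`E_{q₁}^{n₁,m₁} ⊗ E_{q₂}^{n₂,m₂} ⊗ E_{q₃}^{n₃,m₃} ⊗ E_{q₄}^{n₄,m₄}`, entrywise. -/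
theorem stmt1 (n₁ m₁ n₂ m₂ n₃ m₃ n₄ m₄ : ℕ)
    (r : ((Fin m₁ → Fin 2) × (Fin m₂ → Fin 2)) × (Fin m₃ → Fin 2) × (Fin m₄ → Fin 2))
    (c : ((Fin n₁ → Fin 2) × (Fin n₂ → Fin 2)) × (Fin n₃ → Fin 2) × (Fin n₄ → Fin 2)) :
    (1 / (2 * (Real.pi : ℂ))) *
        ∫ α in (-Real.pi)..Real.pi,
          ((Zspider n₁ m₁ α ⊗ₖ Zspider n₂ m₂ (-α)) ⊗ₖ
            (Zspider n₃ m₃ α ⊗ₖ Zspider n₄ m₄ (-α))) r c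
      = ((Espider 0 n₁ m₁ ⊗ₖ Espider 0 n₂ m₂) ⊗ₖ (Espider 0 n₃ m₃ ⊗ₖ Espider 0 n₄ m₄)
          + (Espider 1 n₁ m₁ ⊗ₖ Espider 1 n₂ m₂) ⊗ₖ (Espider 1 n₃ m₃ ⊗ₖ Espider 1 n₄ m₄)
          + (Espider 0 n₁ m₁ ⊗ₖ Espider 0 n₂ m₂) ⊗ₖ (Espider 1 n₃ m₃ ⊗ₖ Espider 1 n₄ m₄)
          + (Espider 1 n₁ m₁ ⊗ₖ Espider 1 n₂ m₂) ⊗ₖ (Espider 0 n₃ m₃ ⊗ₖ Espider 0 n₄ m₄)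
          + (Espider 0 n₁ m₁ ⊗ₖ Espider 1 n₂ m₂) ⊗ₖ (Espider 1 n₃ m₃ ⊗ₖ Espider 0 n₄ m₄)
          + (Espider 1 n₁ m₁ ⊗ₖ Espider 0 n₂ m₂) ⊗ₖ (Espider 0 n₃ m₃ ⊗ₖ Espider 1 n₄ m₄)) r c := by
  have h := six (Espider 0 n₁ m₁ r.1.1 c.1.1) (Espider 1 n₁ m₁ r.1.1 c.1.1)
    (Espider 0 n₂ m₂ r.1.2 c.1.2) (Espider 1 n₂ m₂ r.1.2 c.1.2)
    (Espider 0 n₃ m₃ r.2.1 c.2.1) (Espider 1 n₃ m₃ r.2.1 c.2.1)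
    (Espider 0 n₄ m₄ r.2.2 c.2.2) (Espider 1 n₄ m₄ r.2.2 c.2.2)
  simp only [Matrix.kroneckerMap_apply, Zspider, Matrix.add_apply, Matrix.smul_apply,
    smul_eq_mul]
  exact h
end

section
/- There exist real numbers a, b, c such that f(θ) = a + b·cos θ + c·sin θ for all θ ∈ ℝ. -/
/-!
Since `G² = 1`, `exp (i θ G / 2) = cos (θ/2) + i sin (θ/2) G`, and the half-angle formulas turn the
conjugate of `B = V†HV` into `(B + GBG + cos θ (B - GBG) + sin θ · i[G, B]) / 2`. The three matrices
in this combination are Hermitian, and the trace of `ρ` times a Hermitian matrix is real.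
-/

open Matrix
open scoped ComplexOrder

theorem IsSelfAdjoint.mul_sub_mul_mem_skewAdjoint {R : Type*} [Ring R] [StarRing R] {a b : R}
    (ha : IsSelfAdjoint a) (hb : IsSelfAdjoint b) : a * b - b * a ∈ skewAdjoint R := by
  rw [skewAdjoint.mem_iff, star_sub, star_mul, star_mul, ha.star_eq, hb.star_eq, neg_sub]

theorem Matrix.IsHermitian.isSelfAdjoint_trace_mul {ι R : Type*} [Fintype ι] [CommRing R]
    [StarRing R] {ρ N : Matrix ι ι R} (hρ : ρ.IsHermitian) (hN : N.IsHermitian) :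
    IsSelfAdjoint (ρ * N).trace := by
  rw [IsSelfAdjoint, ← trace_conjTranspose, conjTranspose_mul, hρ.eq, hN.eq, trace_mul_comm]

namespace NormedSpace

variable {A : Type*} [Ring A] [Algebra ℂ A] [TopologicalSpace A] [IsTopologicalRing A]
  [ContinuousSMul ℂ A] [T2Space A] {G : A}

theorem exp_smul_of_mul_self_eq_one (hG : G * G = 1) (z : ℂ) :
    exp (z • G) = Complex.cosh z • 1 + Complex.sinh z • G := by
  have hG_even (k : ℕ) : G ^ (2 * k) = 1 := by rw [pow_mul, sq, hG, one_pow]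
  rw [exp_eq_tsum ℂ]
  refine (HasSum.even_add_odd ?_ ?_).tsum_eq
  · convert (Complex.hasSum_cosh z).smul_const (1 : A) using 2 with k
    rw [smul_pow, hG_even, smul_smul, div_eq_inv_mul]
  · convert (Complex.hasSum_sinh z).smul_const G using 2 with k
    rw [smul_pow, pow_succ G, hG_even, one_mul, smul_smul, div_eq_inv_mul]

theorem exp_smul_mul_mul_exp_neg_smul (hG : G * G = 1) (B : A) (θ : ℂ) :
    exp ((Complex.I * θ / 2) • G) * B * exp (-(Complex.I * θ / 2) • G) =
      (2⁻¹ : ℂ) • (B + G * B * G + Complex.cos θ • (B - G * B * G) +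
        Complex.sin θ • (Complex.I • (G * B - B * G))) := by
  have hI : Complex.I * θ / 2 = θ / 2 * Complex.I := by ring
  rw [exp_smul_of_mul_self_eq_one hG, exp_smul_of_mul_self_eq_one hG, Complex.cosh_neg,
    Complex.sinh_neg, hI, Complex.cosh_mul_I, Complex.sinh_mul_I]
  have hcos : Complex.cos θ = 2 * Complex.cos (θ / 2) ^ 2 - 1 := by
    rw [← Complex.cos_two_mul, mul_div_cancel₀ θ two_ne_zero]
  have hsin : Complex.sin θ = 2 * Complex.sin (θ / 2) * Complex.cos (θ / 2) := by
    rw [← Complex.sin_two_mul, mul_div_cancel₀ θ two_ne_zero]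
  simp only [add_mul, mul_add, smul_mul_assoc, mul_smul_comm, one_mul, mul_one, smul_add,
    mul_assoc]
  rw [hcos, hsin]
  linear_combination (norm := module)
    (Complex.sin_sq_add_cos_sq (θ / 2) - Complex.sin (θ / 2) ^ 2 * Complex.I_sq) • (G * (B * G))

theorem exists_apply_exp_smul_mul_mul_exp_neg_smul_eq [StarRing A] [StarModule ℂ A]
    (hG : IsSelfAdjoint G) (hG2 : G * G = 1) {B : A} (hB : IsSelfAdjoint B) (L : A →ₗ[ℂ] ℂ)
    (hL : ∀ M, IsSelfAdjoint M → IsSelfAdjoint (L M)) :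
    ∃ a b c : ℝ, ∀ θ : ℝ, L (exp ((Complex.I * θ / 2) • G) * B * exp (-(Complex.I * θ / 2) • G)) =
      (a : ℂ) + (b : ℂ) * (Real.cos θ : ℂ) + (c : ℂ) * (Real.sin θ : ℂ) := by
  have hL_re {M : A} (hM : IsSelfAdjoint M) : ((L M).re : ℂ) = L M :=
    Complex.conj_eq_iff_re.mp (hL M hM)
  refine ⟨(L (B + G * B * G)).re / 2, (L (B - G * B * G)).re / 2,
    (L (Complex.I • (G * B - B * G))).re / 2, fun θ => ?_⟩
  push_cast
  rw [exp_smul_mul_mul_exp_neg_smul hG2, map_smul, map_add, map_add, map_smul, map_smul,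
    hL_re (hB.add (hB.conjugate_self hG)), hL_re (hB.sub (hB.conjugate_self hG)),
    hL_re (Complex.isSelfAdjoint_I_smul_iff_mem_skewAdjoint.mpr
      (hG.mul_sub_mul_mem_skewAdjoint hB))]
  simp only [smul_eq_mul]
  ring

end NormedSpace

theorem stmt7_general (n : ℕ)
    (H ρ G V W : Matrix (Fin (2 ^ n)) (Fin (2 ^ n)) ℂ)
    (hH : H.IsHermitian)
    (hρherm : ρ.IsHermitian)
    (hGherm : G.IsHermitian) (hG2 : G * G = 1)
    (f : ℝ → ℂ)
    (hf : ∀ θ : ℝ, f θ =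
      Matrix.trace (ρ * Wᴴ * NormedSpace.exp (((Complex.I * θ) / 2) • G) *
        (Vᴴ * H * V) * NormedSpace.exp ((-((Complex.I * θ) / 2)) • G) * W)) :
    ∃ a b c : ℝ, ∀ θ : ℝ,
      f θ = (a : ℂ) + (b : ℂ) * (Real.cos θ : ℂ) + (c : ℂ) * (Real.sin θ : ℂ) := by
  let L : Matrix (Fin (2 ^ n)) (Fin (2 ^ n)) ℂ →ₗ[ℂ] ℂ := traceLinearMap _ ℂ ℂ ∘ₗ
    LinearMap.mulLeft ℂ ρ ∘ₗ LinearMap.mulLeft ℂ Wᴴ ∘ₗ LinearMap.mulRight ℂ W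
  have hL (M) : L M = (ρ * (Wᴴ * M * W)).trace := by
    simp only [L, LinearMap.comp_apply, LinearMap.mulRight_apply, LinearMap.mulLeft_apply,
      traceLinearMap_apply, Matrix.mul_assoc]
  have hL_selfAdjoint (M) (hM : IsSelfAdjoint M) : IsSelfAdjoint (L M) := by
    rw [hL]
    exact hρherm.isSelfAdjoint_trace_mul (isHermitian_conjTranspose_mul_mul W hM.isHermitian)
  obtain ⟨a, b, c, h⟩ := NormedSpace.exists_apply_exp_smul_mul_mul_exp_neg_smul_eq
    hGherm.isSelfAdjoint hG2 (isHermitian_conjTranspose_mul_mul V hH).isSelfAdjoint L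
    hL_selfAdjoint
  refine ⟨a, b, c, fun θ => ?_⟩
  rw [hf, ← h θ, hL]
  simp only [Matrix.mul_assoc]

/-- with `H` Hermitian, `ρ` a density matrix, `G` Hermitian with `G² = I`,
`V, W` unitary, and `f(θ) = Tr(ρ · W† · exp(iθG/2) · V†HV · exp(−iθG/2) · W)`,
there exist real numbers `a, b, c` with `f(θ) = a + b·cos θ + c·sin θ` for all `θ`. -/
theorem stmt7 (n : ℕ) (hn : 1 ≤ n)
    (H ρ G V W : Matrix (Fin (2 ^ n)) (Fin (2 ^ n)) ℂ)
    (hH : H.IsHermitian)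
    (hρherm : ρ.IsHermitian) (hρpsd : ρ.PosSemidef) (hρtr : ρ.trace = 1)
    (hGherm : G.IsHermitian) (hG2 : G * G = 1)
    (hV : V ∈ Matrix.unitaryGroup (Fin (2 ^ n)) ℂ)
    (hW : W ∈ Matrix.unitaryGroup (Fin (2 ^ n)) ℂ)
    (f : ℝ → ℂ)
    (hf : ∀ θ : ℝ, f θ =
      Matrix.trace (ρ * Wᴴ * NormedSpace.exp (((Complex.I * θ) / 2) • G) *
        (Vᴴ * H * V) * NormedSpace.exp ((-((Complex.I * θ) / 2)) • G) * W)) :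
    ∃ a b c : ℝ, ∀ θ : ℝ,
      f θ = (a : ℂ) + (b : ℂ) * (Real.cos θ : ℂ) + (c : ℂ) * (Real.sin θ : ℂ) :=
  stmt7_general n H ρ G V W hH hρherm hGherm hG2 f hf
end

section
/- (Parameter-shift rule) The function f is differentiable and f′(θ) = (f(θ + π/2) − f(θ − π/2)) / 2 for all θ ∈ ℝ. -/
open Matrix
open scoped ComplexOrder

/-!
Since `G² = 1`, the power series gives `exp (z • G) = cosh z + sinh z • G`. Conjugating by
`exp (iθ/2 • G)` and using the half-angle formulas, `f θ = a + b cos θ + d sin θ` with constants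
`a b d`, and for any such trigonometric polynomial of degree one the shifts by `±π/2` give
`f (θ + π/2) - f (θ - π/2) = 2 (d cos θ - b sin θ) = 2 f′ θ`.
-/

section Involution

variable {A : Type*} [Ring A] [Algebra ℂ A] [TopologicalSpace A] [IsTopologicalRing A]
  [ContinuousSMul ℂ A] [T2Space A] {G : A}

theorem exp_smul_eq_cosh_add_sinh_of_mul_self_eq_one (hG : G * G = 1) (z : ℂ) :
    NormedSpace.exp (z • G) = Complex.cosh z • 1 + Complex.sinh z • G := by
  have hG2 : G ^ 2 = 1 := by rw [pow_two, hG]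
  rw [NormedSpace.exp_eq_tsum (𝕂 := ℂ)]
  refine HasSum.tsum_eq (HasSum.even_add_odd ?_ ?_)
  · convert (Complex.hasSum_cosh z).smul_const (1 : A) using 2 with k
    rw [smul_pow, pow_mul G, hG2, one_pow, smul_smul, div_eq_mul_inv, mul_comm]
  · convert (Complex.hasSum_sinh z).smul_const G using 2 with k
    rw [smul_pow, pow_succ G, pow_mul G, hG2, one_pow, one_mul, smul_smul, div_eq_mul_inv,
      mul_comm]

theorem exp_smul_mul_mul_exp_neg_smul_of_mul_self_eq_one (hG : G * G = 1) (X : A) (θ : ℝ) :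
    NormedSpace.exp ((Complex.I * θ / 2) • G) * X * NormedSpace.exp (-(Complex.I * θ / 2) • G) =
      (1 / 2 : ℂ) • (X + G * X * G) + (Real.cos θ : ℂ) • ((1 / 2 : ℂ) • (X - G * X * G)) +
        (Real.sin θ : ℂ) • ((Complex.I / 2) • (G * X - X * G)) := by
  set z : ℂ := Complex.I * θ / 2
  have hz : 2 * z = θ * Complex.I := by ring
  have hcosh_sq := Complex.cosh_sq_sub_sinh_sq z
  have hcos := Complex.cosh_two_mul z
  have hsin := Complex.sinh_two_mul z
  rw [hz, Complex.cosh_mul_I] at hcos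
  rw [hz, Complex.sinh_mul_I] at hsin
  rw [exp_smul_eq_cosh_add_sinh_of_mul_self_eq_one hG,
    exp_smul_eq_cosh_add_sinh_of_mul_self_eq_one hG, Complex.cosh_neg, Complex.sinh_neg]
  simp only [add_mul, mul_add, smul_mul_assoc, mul_smul_comm, one_mul, mul_one, smul_smul,
    mul_assoc]
  -- half-angle formulas: `cosh² z = (1 + cos θ)/2`, `sinh² z = (cos θ - 1)/2`,
  -- `2 sinh z cosh z = i sin θ`
  linear_combination (norm := module) ((hcosh_sq - hcos) / 2) • X +
    ((hcos + hcosh_sq) / 2) • (G * (X * G)) - (hsin / 2) • (G * X - X * G)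

end Involution

theorem differentiable_and_deriv_eq_shift_of_eq_cos_sin {E : Type*} [NormedAddCommGroup E]
    [NormedSpace ℝ E] {f : ℝ → E} (a b d : E)
    (hf : ∀ θ, f θ = a + Real.cos θ • b + Real.sin θ • d) :
    Differentiable ℝ f ∧
      ∀ θ, deriv f θ = (2 : ℝ)⁻¹ • (f (θ + Real.pi / 2) - f (θ - Real.pi / 2)) := by
  have hf' : f = fun θ => a + Real.cos θ • b + Real.sin θ • d := funext hf
  have hderiv (θ : ℝ) : HasDerivAt f (-Real.sin θ • b + Real.cos θ • d) θ := by
    rw [hf']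
    exact (((Real.hasDerivAt_cos θ).smul_const b).const_add a).add
      ((Real.hasDerivAt_sin θ).smul_const d)
  refine ⟨fun θ => (hderiv θ).differentiableAt, fun θ => ?_⟩
  rw [(hderiv θ).deriv, hf, hf, Real.cos_add_pi_div_two, Real.sin_add_pi_div_two,
    Real.cos_sub_pi_div_two, Real.sin_sub_pi_div_two]
  module

theorem stmt8_general (n : ℕ)
    (H ρ G V W : Matrix (Fin (2 ^ n)) (Fin (2 ^ n)) ℂ)
    (hG2 : G * G = 1)
    (f : ℝ → ℂ)
    (hf : ∀ θ : ℝ, f θ =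
      Matrix.trace (ρ * Wᴴ * NormedSpace.exp (((Complex.I * θ) / 2) • G) *
        (Vᴴ * H * V) * NormedSpace.exp ((-((Complex.I * θ) / 2)) • G) * W)) :
    Differentiable ℝ f ∧
      ∀ θ : ℝ, deriv f θ = (f (θ + Real.pi / 2) - f (θ - Real.pi / 2)) / 2 := by
  set X := Vᴴ * H * V
  set L : Matrix (Fin (2 ^ n)) (Fin (2 ^ n)) ℂ → ℂ := fun M => trace (ρ * Wᴴ * M * W)
  have hL_add (M N) : L (M + N) = L M + L N := by
    simp only [L, Matrix.mul_add, Matrix.add_mul, trace_add]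
  have hL_smul (c : ℂ) (M) : L (c • M) = c * L M := by
    simp only [L, Matrix.mul_smul, Matrix.smul_mul, trace_smul, smul_eq_mul]
  have hf_trig (θ : ℝ) : f θ = L ((1 / 2 : ℂ) • (X + G * X * G)) +
      Real.cos θ • L ((1 / 2 : ℂ) • (X - G * X * G)) +
      Real.sin θ • L ((Complex.I / 2) • (G * X - X * G)) := by
    have hfL : f θ = L (NormedSpace.exp ((Complex.I * θ / 2) • G) * X *
        NormedSpace.exp (-(Complex.I * θ / 2) • G)) := by
      simp only [hf θ, L, Matrix.mul_assoc]
    rw [hfL, exp_smul_mul_mul_exp_neg_smul_of_mul_self_eq_one hG2 X θ, hL_add, hL_add,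
      hL_smul (Real.cos θ), hL_smul (Real.sin θ), Complex.real_smul, Complex.real_smul]
  obtain ⟨hdiff, hderiv⟩ := differentiable_and_deriv_eq_shift_of_eq_cos_sin _ _ _ hf_trig
  refine ⟨hdiff, fun θ => ?_⟩
  rw [hderiv, Complex.real_smul, Complex.ofReal_inv, Complex.ofReal_ofNat, inv_mul_eq_div]

/-- parameter-shift rule: with `H` Hermitian, `ρ` a density matrix, `G` Hermitian
with `G² = I`, `V, W` unitary, and `f(θ) = Tr(ρ · W† · exp(iθG/2) · V†HV · exp(−iθG/2) · W)`,
`f` is differentiable and `f′(θ) = (f(θ + π/2) − f(θ − π/2)) / 2` for all `θ`. -/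
theorem stmt8 (n : ℕ) (hn : 1 ≤ n)
    (H ρ G V W : Matrix (Fin (2 ^ n)) (Fin (2 ^ n)) ℂ)
    (hH : H.IsHermitian)
    (hρherm : ρ.IsHermitian) (hρpsd : ρ.PosSemidef) (hρtr : ρ.trace = 1)
    (hGherm : G.IsHermitian) (hG2 : G * G = 1)
    (hV : V ∈ Matrix.unitaryGroup (Fin (2 ^ n)) ℂ)
    (hW : W ∈ Matrix.unitaryGroup (Fin (2 ^ n)) ℂ)
    (f : ℝ → ℂ)
    (hf : ∀ θ : ℝ, f θ =
      Matrix.trace (ρ * Wᴴ * NormedSpace.exp (((Complex.I * θ) / 2) • G) *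
        (Vᴴ * H * V) * NormedSpace.exp ((-((Complex.I * θ) / 2)) • G) * W)) :
    Differentiable ℝ f ∧
      ∀ θ : ℝ, deriv f θ = (f (θ + Real.pi / 2) - f (θ - Real.pi / 2)) / 2 :=
  stmt8_general n H ρ G V W hG2 f hf
end
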